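/- Let m ≥ 1 and N ≥ 1 be integers and β a multiindex. For every smooth function v : ℝ^N → ℂ one has the commutation identity D^β (B v) = B (D^β v) + (|β|/(2m)) D^β v, where B v = -i(-Δ)^m v + (1/(2m)) (y·∇v) + (N/(2m)) v. Consequently, if F : ℝ^N → ℂ is smooth and B F = 0, then B (D^β F) = -(|β|/(2m)) D^β F, i.e. D^β F is an eigenfunction of B with eigenvalue λ_β = -|β|/(2m). -/

import Mathlib

open MeasureTheory Filter Complex

noncomputable section

/-- `ℝ^N`. -/
abbrev Sp (N : ℕ) : Type := EuclideanSpace ℝ (Fin N)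

/-- Partial derivative `∂/∂y_i`. -/
def pd {N : ℕ} (i : Fin N) (f : Sp N → ℂ) : Sp N → ℂ :=
  fun y => fderiv ℝ f y (EuclideanSpace.single i 1)

/-- The Laplacian `Δ = Σ_i ∂²/∂y_i²`. -/
def lap {N : ℕ} (f : Sp N → ℂ) : Sp N → ℂ :=
  fun y => ∑ i, pd i (pd i f) y

/-- The iterated negative Laplacian `(-Δ)^m`. -/
def negLapPow {N : ℕ} (m : ℕ) (f : Sp N → ℂ) : Sp N → ℂ :=
  (fun g : Sp N → ℂ => fun y => -(lap g y))^[m] f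

/-- The Euler operator `y · ∇`. -/
def euler {N : ℕ} (f : Sp N → ℂ) : Sp N → ℂ :=
  fun y => ∑ i, (y i : ℂ) * pd i f y

/-- The rescaled Schrödinger operator `B v = -i(-Δ)^m v + (1/2m) y·∇v + (N/2m) v`. -/
def Bop {N : ℕ} (m : ℕ) (f : Sp N → ℂ) : Sp N → ℂ :=
  fun y => -Complex.I * negLapPow m f y + (1/(2*(m:ℂ))) * euler f y
    + ((N:ℂ)/(2*(m:ℂ))) * f y

/-- The adjoint rescaled operator `B* v = -i(-Δ)^m v - (1/2m) y·∇v`. -/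
def Bstar {N : ℕ} (m : ℕ) (f : Sp N → ℂ) : Sp N → ℂ :=
  fun y => -Complex.I * negLapPow m f y - (1/(2*(m:ℂ))) * euler f y

/-- The multiindex derivative `D^β = ∂^{β₁}_{y₁} ⋯ ∂^{β_N}_{y_N}`. -/
def Dop {N : ℕ} (β : Fin N → ℕ) (f : Sp N → ℂ) : Sp N → ℂ :=
  ((List.ofFn fun i : Fin N => (pd i)^[β i]).foldr (· ∘ ·) id) f

/-- The weighted Sobolev integrand `Σ_{k=0}^{2m} |D^k v(y)|² = Σ_{|β| ≤ 2m} |D^β v(y)|²`. -/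
def sobSum {N : ℕ} (m : ℕ) (v : Sp N → ℂ) (y : Sp N) : ℝ :=
  ∑ k ∈ Finset.range (2*m+1), ∑ β ∈ Finset.Nat.antidiagonalTuple N k, ‖Dop β v y‖ ^ 2

/-- The weight `ρ(y) = exp(-|y|^α)`, `α = 2m/(2m-1)`. -/
def rho {N : ℕ} (m : ℕ) (y : Sp N) : ℝ :=
  Real.exp (-(‖y‖ ^ ((2*(m:ℝ))/(2*(m:ℝ)-1))))

/-- The weight `ρ*(y) = exp(|y|^α)`, `α = 2m/(2m-1)`. -/
def rhoStar {N : ℕ} (m : ℕ) (y : Sp N) : ℝ :=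
  Real.exp (‖y‖ ^ ((2*(m:ℝ))/(2*(m:ℝ)-1)))

-- auxiliary material
local notation "Sm" => ContDiff ℝ (⊤:ℕ∞)

lemma aux_htop1 : ((⊤:ℕ∞) : WithTop ℕ∞) + 1 ≤ ((⊤:ℕ∞) : WithTop ℕ∞) := by norm_cast

lemma aux_htop2 : (2 : WithTop ℕ∞) ≤ ((⊤:ℕ∞) : WithTop ℕ∞) := by norm_cast

lemma aux_hone : (1 : WithTop ℕ∞) ≤ ((⊤:ℕ∞) : WithTop ℕ∞) := by norm_cast

lemma pd_contDiff {N} (i : Fin N) {f : Sp N → ℂ} (hf : Sm f) : Sm (pd i f) :=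
  (hf.fderiv_right (m := (⊤:ℕ∞)) aux_htop1).clm_apply contDiff_const

lemma sm_diff {N} {f : Sp N → ℂ} (hf : Sm f) (y : Sp N) : DifferentiableAt ℝ f y :=
  (hf.differentiable (by simp)) y

lemma pd_comm {N} (i j : Fin N) {f : Sp N → ℂ} (hf : Sm f) (y : Sp N) :
    pd i (pd j f) y = pd j (pd i f) y := by
  have h2 : ∀ (k l : Fin N), pd k (pd l f) y
      = fderiv ℝ (fderiv ℝ f) y (EuclideanSpace.single k 1) (EuclideanSpace.single l 1) := by
    intro k l
    have hdiff : DifferentiableAt ℝ (fderiv ℝ f) y :=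
      ((hf.fderiv_right (m := (⊤:ℕ∞)) aux_htop1).differentiable (by simp)) y
    show fderiv ℝ (fun z => fderiv ℝ f z (EuclideanSpace.single l 1)) y (EuclideanSpace.single k 1)
        = _
    rw [fderiv_clm_apply hdiff (differentiableAt_const _)]
    simp
  rw [h2, h2]
  exact (hf.contDiffAt.isSymmSndFDerivAt (by rw [minSmoothness_of_isRCLikeNormedField]; exact aux_htop2)) _ _

lemma pd_add {N} (i : Fin N) {a b : Sp N → ℂ} (y : Sp N)
    (ha : DifferentiableAt ℝ a y) (hb : DifferentiableAt ℝ b y) :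
    pd i (fun z => a z + b z) y = pd i a y + pd i b y := by
  show fderiv ℝ (fun z => a z + b z) y _ = _
  rw [fderiv_fun_add ha hb]; rfl

lemma pd_const_mul {N} (i : Fin N) {a : Sp N → ℂ} (c : ℂ) (y : Sp N)
    (ha : DifferentiableAt ℝ a y) :
    pd i (fun z => c * a z) y = c * pd i a y := by
  show fderiv ℝ (fun z => c * a z) y _ = _
  rw [fderiv_const_mul ha c]; rfl

lemma pd_neg {N} (i : Fin N) (a : Sp N → ℂ) (y : Sp N) :
    pd i (fun z => -(a z)) y = -(pd i a y) := by
  show fderiv ℝ (fun z => -(a z)) y _ = _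
  rw [fderiv_fun_neg]; rfl

lemma pd_sum {N} (i : Fin N) {a : Fin N → Sp N → ℂ} (y : Sp N)
    (ha : ∀ j, DifferentiableAt ℝ (a j) y) :
    pd i (fun z => ∑ j, a j z) y = ∑ j, pd i (a j) y := by
  show fderiv ℝ (fun z => ∑ j, a j z) y _ = _
  rw [fderiv_fun_sum (fun j _ => ha j)]
  simp [pd]

lemma pd_zero {N} (i : Fin N) (y : Sp N) : pd i (fun _ => (0:ℂ)) y = 0 := by
  show fderiv ℝ (fun _ : Sp N => (0:ℂ)) y _ = _
  rw [fderiv_fun_const]; rfl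

lemma lap_contDiff {N} {f : Sp N → ℂ} (hf : Sm f) : Sm (lap f) := by
  unfold lap
  exact ContDiff.sum (fun i _ => pd_contDiff i (pd_contDiff i hf))

lemma negLapPow_succ' {N} (m : ℕ) (f : Sp N → ℂ) :
    negLapPow (m+1) f = fun y => -(lap (negLapPow m f) y) := by
  unfold negLapPow
  rw [Function.iterate_succ_apply']

lemma negLapPow_contDiff {N} (m : ℕ) {f : Sp N → ℂ} (hf : Sm f) : Sm (negLapPow m f) := by
  induction m with
  | zero => exact hf
  | succ m ih => rw [negLapPow_succ']; exact (lap_contDiff ih).neg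

lemma pd_lap {N} (i : Fin N) {f : Sp N → ℂ} (hf : Sm f) (y : Sp N) :
    pd i (lap f) y = lap (pd i f) y := by
  unfold lap
  rw [pd_sum i y (fun j => sm_diff (pd_contDiff j (pd_contDiff j hf)) y)]
  refine Finset.sum_congr rfl fun j _ => ?_
  rw [pd_comm i j (pd_contDiff j hf) y]
  congr 1
  funext z
  exact pd_comm i j hf z

lemma pd_negLapPow {N} (i : Fin N) (m : ℕ) {f : Sp N → ℂ} (hf : Sm f) :
    pd i (negLapPow m f) = negLapPow m (pd i f) := by
  induction m with
  | zero => rfl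
  | succ m ih =>
      rw [negLapPow_succ', negLapPow_succ']
      funext y
      rw [pd_neg, pd_lap i (negLapPow_contDiff m hf) y, ih]

def coordC {N : ℕ} (j : Fin N) : Sp N →L[ℝ] ℂ :=
  Complex.ofRealCLM.comp (EuclideanSpace.proj j)

lemma coordC_apply {N} (j : Fin N) (y : Sp N) : coordC j y = (y j : ℂ) := rfl

lemma pd_coord_mul {N} (i j : Fin N) {a : Sp N → ℂ} (y : Sp N)
    (ha : DifferentiableAt ℝ a y) :
    pd i (fun z => (z j : ℂ) * a z) y
      = (y j : ℂ) * pd i a y + (if j = i then a y else 0) := by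
  have hc : DifferentiableAt ℝ (fun z : Sp N => (z j : ℂ)) y := (coordC j).differentiableAt
  show fderiv ℝ (fun z => (z j : ℂ) * a z) y _ = _
  rw [fderiv_fun_mul hc ha]
  have hfc : fderiv ℝ (fun z : Sp N => (z j : ℂ)) y = coordC j := by
    exact (coordC j).fderiv
  simp only [ContinuousLinearMap.add_apply, ContinuousLinearMap.smul_apply, hfc,
    coordC_apply, smul_eq_mul]
  rw [EuclideanSpace.single_apply]
  by_cases h : j = i <;> simp [pd, h] <;> ring

lemma euler_contDiff {N} {f : Sp N → ℂ} (hf : Sm f) : Sm (euler f) := by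
  unfold euler
  refine ContDiff.sum fun j _ => ContDiff.mul ?_ (pd_contDiff j hf)
  exact (coordC j).contDiff

lemma pd_euler {N} (i : Fin N) {f : Sp N → ℂ} (hf : Sm f) (y : Sp N) :
    pd i (euler f) y = euler (pd i f) y + pd i f y := by
  unfold euler
  rw [pd_sum i (a := fun j z => ((z j : ℝ) : ℂ) * pd j f z) y (fun j => DifferentiableAt.mul
    ((coordC j).differentiableAt : DifferentiableAt ℝ (fun z : Sp N => ((z j : ℝ) : ℂ)) y)
    (sm_diff (pd_contDiff j hf) y))]
  have : ∀ j : Fin N, pd i (fun z => (z j : ℂ) * pd j f z) y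
      = (y j : ℂ) * pd j (pd i f) y + (if j = i then pd j f y else 0) := by
    intro j
    rw [pd_coord_mul i j y (sm_diff (pd_contDiff j hf) y), pd_comm i j hf y]
  simp only [this, Finset.sum_add_distrib, Finset.sum_ite_eq', Finset.mem_univ, if_true]

lemma Bop_contDiff {N} (m : ℕ) {f : Sp N → ℂ} (hf : Sm f) : Sm (Bop m f) := by
  unfold Bop
  exact ((contDiff_const.mul (negLapPow_contDiff m hf)).add
    (contDiff_const.mul (euler_contDiff hf))).add (contDiff_const.mul hf)

lemma pd_Bop {N} (i : Fin N) (m : ℕ) {f : Sp N → ℂ} (hf : Sm f) (y : Sp N) :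
    pd i (Bop m f) y = Bop m (pd i f) y + (1/(2*(m:ℂ))) * pd i f y := by
  have h1 : DifferentiableAt ℝ (fun z => -Complex.I * negLapPow m f z) y :=
    (sm_diff (negLapPow_contDiff m hf) y).const_mul _
  have h2 : DifferentiableAt ℝ (fun z => (1/(2*(m:ℂ))) * euler f z) y :=
    (sm_diff (euler_contDiff hf) y).const_mul _
  have h3 : DifferentiableAt ℝ (fun z => ((N:ℂ)/(2*(m:ℂ))) * f z) y :=
    (sm_diff hf y).const_mul _
  unfold Bop
  rw [pd_add i y (h1.fun_add h2) h3, pd_add i y h1 h2,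
    pd_const_mul i _ y (sm_diff (negLapPow_contDiff m hf) y),
    pd_const_mul i _ y (sm_diff (euler_contDiff hf) y),
    pd_const_mul i _ y (sm_diff hf y),
    pd_negLapPow i m hf, pd_euler i hf y]
  ring

def pdList {N : ℕ} (l : List (Fin N)) (f : Sp N → ℂ) : Sp N → ℂ := l.foldr pd f

lemma pdList_contDiff {N} (l : List (Fin N)) {f : Sp N → ℂ} (hf : Sm f) : Sm (pdList l f) := by
  induction l with
  | nil => exact hf
  | cons i t ih => exact pd_contDiff i ih

lemma pdList_Bop {N} (m : ℕ) (l : List (Fin N)) {f : Sp N → ℂ} (hf : Sm f) :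
    pdList l (Bop m f) = fun y => Bop m (pdList l f) y
      + ((l.length : ℂ)/(2*(m:ℂ))) * pdList l f y := by
  induction l with
  | nil =>
      funext y
      simp [pdList, Bop]
  | cons i t ih =>
      have hg : Sm (pdList t f) := pdList_contDiff t hf
      funext y
      show pd i (pdList t (Bop m f)) y = _
      rw [ih]
      rw [pd_add i y (sm_diff (Bop_contDiff m hg) y)
        ((sm_diff (pdList_contDiff t hf) y).const_mul _),
        pd_const_mul i _ y (sm_diff (pdList_contDiff t hf) y),
        pd_Bop i m hg y]
      show _ = Bop m (pd i (pdList t f)) y + _ * pd i (pdList t f) y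
      push_cast [List.length_cons]
      ring

lemma pdList_append {N} (l1 l2 : List (Fin N)) (f : Sp N → ℂ) :
    pdList (l1 ++ l2) f = pdList l1 (pdList l2 f) := by
  unfold pdList
  rw [List.foldr_append]

lemma iterate_pd_eq {N} (i : Fin N) (k : ℕ) (f : Sp N → ℂ) :
    (pd i)^[k] f = pdList (List.replicate k i) f := by
  induction k with
  | zero => rfl
  | succ k ih =>
      rw [Function.iterate_succ_apply', List.replicate_succ]
      show pd i ((pd i)^[k] f) = pd i (pdList (List.replicate k i) f)
      rw [ih]

lemma foldr_comp_pdList {N} (Ls : List (List (Fin N))) (f : Sp N → ℂ) :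
    ((Ls.map (fun l (g : Sp N → ℂ) => pdList l g)).foldr (· ∘ ·) id) f = pdList Ls.flatten f := by
  induction Ls with
  | nil => rfl
  | cons l t ih =>
      show pdList l (((t.map _).foldr (· ∘ ·) id) f) = _
      rw [ih, show (l::t).flatten = l ++ t.flatten from rfl, pdList_append]

lemma Dop_eq_pdList {N} (β : Fin N → ℕ) (f : Sp N → ℂ) :
    Dop β f = pdList ((List.ofFn fun i => List.replicate (β i) i).flatten) f := by
  unfold Dop
  rw [← foldr_comp_pdList]
  congr 1
  rw [List.map_ofFn]
  have h : (fun i : Fin N => (pd i)^[β i])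
      = ((fun l (g : Sp N → ℂ) => pdList l g) ∘ fun i => List.replicate (β i) i) := by
    funext i g
    exact iterate_pd_eq i (β i) g
  rw [h]

lemma join_length {N} (β : Fin N → ℕ) :
    ((List.ofFn fun i => List.replicate (β i) i).flatten).length = ∑ i, β i := by
  simp [List.length_flatten, List.map_ofFn, Function.comp, List.sum_ofFn]

lemma pdList_zero {N} (l : List (Fin N)) :
    pdList l (fun _ => (0:ℂ)) = fun _ => (0:ℂ) := by
  induction l with
  | nil => rfl
  | cons i t ih =>
      show pd i (pdList t fun _ => (0:ℂ)) = _
      rw [ih]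
      funext y
      exact pd_zero i y


/-- Commutation identity `D^β B = (B + |β|/(2m)) D^β`, and its consequence: if `B F = 0`
then `D^β F` is an eigenfunction of `B` with eigenvalue `-|β|/(2m)`. -/
theorem stmt_7 (m N : ℕ) (hm : 1 ≤ m) (hN : 1 ≤ N) (β : Fin N → ℕ) :
    (∀ v : Sp N → ℂ, ContDiff ℝ (⊤ : ℕ∞) v → ∀ y : Sp N,
        Dop β (Bop m v) y = Bop m (Dop β v) y
          + ((((∑ i, β i : ℕ)) : ℂ)/(2*(m:ℂ))) * Dop β v y)
    ∧
    (∀ F : Sp N → ℂ, ContDiff ℝ (⊤ : ℕ∞) F → (∀ y, Bop m F y = 0) →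
        ∀ y : Sp N,
          Bop m (Dop β F) y = -((((∑ i, β i : ℕ)) : ℂ)/(2*(m:ℂ))) * Dop β F y) := by
  have part1 : ∀ v : Sp N → ℂ, ContDiff ℝ (⊤ : ℕ∞) v → ∀ y : Sp N,
      Dop β (Bop m v) y = Bop m (Dop β v) y
        + ((((∑ i, β i : ℕ)) : ℂ)/(2*(m:ℂ))) * Dop β v y := by
    intro v hv y
    have hv' : Sm v := hv.of_le (by simp)
    set L := (List.ofFn fun i => List.replicate (β i) i).flatten with hL
    calc Dop β (Bop m v) y = pdList L (Bop m v) y := by rw [Dop_eq_pdList]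
      _ = Bop m (pdList L v) y + ((L.length : ℂ)/(2*(m:ℂ))) * pdList L v y := by
          rw [pdList_Bop m L hv']
      _ = _ := by rw [hL, join_length, ← Dop_eq_pdList]
  refine ⟨part1, ?_⟩
  intro F hF hBF y
  have h1 := part1 F hF y
  have h0 : Bop m F = fun _ => (0:ℂ) := funext hBF
  rw [h0, Dop_eq_pdList, pdList_zero] at h1
  linear_combination -h1
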